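/- With the form-bracket {α_1,...,α_n} = d(P(α_1,...,α_n)) + Σ_k (-1)^{n+k} i(♯_P(α_{(n,k̂)})) dα_k on a Nambu-Poisson manifold (M,P), for any f ∈ C^∞(M) and 1-forms α_1,...,α_n one has {fα_1, α_2,...,α_n} = f{α_1,...,α_n} + P(df, α_2,...,α_n) α_1. -/

import Mathlib

/-- The `n`-ary bracket induced by an `n`-vector field `P`. -/
noncomputable def nbr {E : Type*} [NormedAddCommGroup E] [NormedSpace ℝ E] {n : ℕ}
    (P : E → ((E →L[ℝ] ℝ) [⋀^Fin n]→ₗ[ℝ] ℝ)) (f : Fin n → E → ℝ) (x : E) : ℝ :=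
  P x fun i => fderiv ℝ (f i) x

/-- Smoothness of an `n`-vector field. -/
def SmoothNV {E : Type*} [NormedAddCommGroup E] [NormedSpace ℝ E] {n : ℕ}
    (P : E → ((E →L[ℝ] ℝ) [⋀^Fin n]→ₗ[ℝ] ℝ)) : Prop :=
  ∀ α : Fin n → E →L[ℝ] ℝ, ContDiff ℝ (⊤ : ℕ∞) fun x => P x α

/-- `P` is a Nambu-Poisson tensor: the fundamental identity holds. -/
def IsNambu {E : Type*} [NormedAddCommGroup E] [NormedSpace ℝ E] {n : ℕ}
    (P : E → ((E →L[ℝ] ℝ) [⋀^Fin (n + 1)]→ₗ[ℝ] ℝ)) : Prop :=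
  ∀ (f : Fin n → E → ℝ) (g : Fin (n + 1) → E → ℝ),
    (∀ i, ContDiff ℝ (⊤ : ℕ∞) (f i)) → (∀ i, ContDiff ℝ (⊤ : ℕ∞) (g i)) →
    nbr P (Fin.snoc f (nbr P g)) =
      ∑ k, nbr P (Function.update g k (nbr P (Fin.snoc f (g k))))

/-- `♯_P(α₁,…,αₙ)` at `x`, on `ℝ^m`: the vector characterized by
`⟨β, ♯_P(α₁,…,αₙ)⟩ = P(α₁,…,αₙ,β)`. -/
noncomputable def sharp {m n : ℕ}
    (P : (Fin m → ℝ) → (((Fin m → ℝ) →L[ℝ] ℝ) [⋀^Fin (n + 1)]→ₗ[ℝ] ℝ))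
    (α : Fin n → (Fin m → ℝ) →L[ℝ] ℝ) (x : Fin m → ℝ) : Fin m → ℝ :=
  ∑ j : Fin m,
    P x (Fin.snoc α (ContinuousLinearMap.proj j)) • (Pi.single j 1 : Fin m → ℝ)

/-- The Nambu-Poisson form-bracket of `n+1` one-forms:
`{α₁,…,α_{n+1}} = d(P(α₁,…,α_{n+1})) + Σ_k (-1)^{(n+1)+k} i(♯_P(α_{(k̂)})) dα_k`
(here with zero-based index `k`, the sign is `(-1)^{n+k}`; the exterior derivative of a
1-form is `dα(u,v) = (Dα·u)v − (Dα·v)u`). -/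
noncomputable def formBracket {m n : ℕ}
    (P : (Fin m → ℝ) → (((Fin m → ℝ) →L[ℝ] ℝ) [⋀^Fin (n + 1)]→ₗ[ℝ] ℝ))
    (α : Fin (n + 1) → (Fin m → ℝ) → (Fin m → ℝ) →L[ℝ] ℝ) (x : Fin m → ℝ) :
    (Fin m → ℝ) →L[ℝ] ℝ :=
  fderiv ℝ (fun y => P y fun i => α i y) x +
    ∑ k : Fin (n + 1), ((-1 : ℝ)) ^ (n + (k : ℕ)) •
      ((fderiv ℝ (α k) x) (sharp P (fun i => α (k.succAbove i) x) x) -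
        (fderiv ℝ (α k) x).flip (sharp P (fun i => α (k.succAbove i) x) x))

open ContinuousLinearMap in
lemma clm_eq_sum {m : ℕ} (β : (Fin m → ℝ) →L[ℝ] ℝ) :
    β = ∑ j, β (Pi.single j 1) • (ContinuousLinearMap.proj j : (Fin m → ℝ) →L[ℝ] ℝ) := by
  ext y
  rw [ContinuousLinearMap.sum_apply]
  simp only [ContinuousLinearMap.smul_apply, ContinuousLinearMap.proj_apply, smul_eq_mul]
  have h := (β : (Fin m → ℝ) →ₗ[ℝ] ℝ).pi_apply_eq_sum_univ y
  simp only [ContinuousLinearMap.coe_coe] at h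
  rw [h]
  refine Finset.sum_congr rfl fun j _ => ?_
  rw [smul_eq_mul, mul_comm]
  congr 1
  congr 1
  funext i
  simp [Pi.single_apply, eq_comm]
open ContinuousLinearMap in
lemma P_snoc_eq_sum {m n : ℕ}
    (P : (Fin m → ℝ) → (((Fin m → ℝ) →L[ℝ] ℝ) [⋀^Fin (n + 1)]→ₗ[ℝ] ℝ))
    (x : Fin m → ℝ) (γ : Fin n → (Fin m → ℝ) →L[ℝ] ℝ) (β : (Fin m → ℝ) →L[ℝ] ℝ) :
    P x (Fin.snoc γ β) =
      ∑ j, β (Pi.single j 1) * P x (Fin.snoc γ (ContinuousLinearMap.proj j)) := by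
  conv_lhs => rw [clm_eq_sum β, ← Fin.update_snoc_last (x := 0)]
  rw [(P x).map_update_sum]
  refine Finset.sum_congr rfl fun j _ => ?_
  rw [(P x).map_update_smul, Fin.update_snoc_last, smul_eq_mul]
open ContinuousLinearMap in
lemma sharp_pairing {m n : ℕ}
    (P : (Fin m → ℝ) → (((Fin m → ℝ) →L[ℝ] ℝ) [⋀^Fin (n + 1)]→ₗ[ℝ] ℝ))
    (γ : Fin n → (Fin m → ℝ) →L[ℝ] ℝ) (x : Fin m → ℝ) (β : (Fin m → ℝ) →L[ℝ] ℝ) :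
    β (sharp P γ x) = P x (Fin.snoc γ β) := by
  rw [P_snoc_eq_sum]
  unfold sharp
  rw [map_sum]
  refine Finset.sum_congr rfl fun j _ => ?_
  rw [map_smul, smul_eq_mul, mul_comm]
open ContinuousLinearMap in
lemma snoc_comp_rotate {n : ℕ} {X : Type*} (γ : Fin n → X) (β : X) :
    Fin.cons β γ ∘ finRotate (n + 1) = Fin.snoc γ β := by
  funext i
  induction i using Fin.lastCases with
  | last => simp [finRotate_last, Fin.snoc_last]
  | cast j =>
    have h1 : finRotate (n + 1) j.castSucc = j.succ := by
      rw [finRotate_succ_apply, Fin.coeSucc_eq_succ]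
    simp [Function.comp, h1, Fin.snoc_castSucc]
open ContinuousLinearMap in
lemma P_snoc_rotate {m n : ℕ}
    (P : (Fin m → ℝ) → (((Fin m → ℝ) →L[ℝ] ℝ) [⋀^Fin (n + 1)]→ₗ[ℝ] ℝ))
    (x : Fin m → ℝ) (γ : Fin n → (Fin m → ℝ) →L[ℝ] ℝ) (β : (Fin m → ℝ) →L[ℝ] ℝ) :
    P x (Fin.snoc γ β) = (-1 : ℝ) ^ n * P x (Fin.cons β γ) := by
  rw [← snoc_comp_rotate, (P x).map_perm, sign_finRotate]
  simp only [Units.smul_def, Units.val_pow_eq_pow_val, Units.coe_neg_one, zsmul_eq_mul]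
  push_cast
  ring
open ContinuousLinearMap in
lemma sharp_update_smul {m n : ℕ} [NeZero n]
    (P : (Fin m → ℝ) → (((Fin m → ℝ) →L[ℝ] ℝ) [⋀^Fin (n + 1)]→ₗ[ℝ] ℝ))
    (γ : Fin n → (Fin m → ℝ) →L[ℝ] ℝ) (x : Fin m → ℝ) (c : ℝ) :
    sharp P (Function.update γ 0 (c • γ 0)) x = c • sharp P γ x := by
  unfold sharp
  rw [Finset.smul_sum]
  refine Finset.sum_congr rfl fun j _ => ?_
  have hγ : Fin.snoc (α := fun _ : Fin (n+1) => (Fin m → ℝ) →L[ℝ] ℝ) γ (ContinuousLinearMap.proj j) ((0 : Fin n).castSucc) = γ 0 := by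
    rw [Fin.snoc_castSucc]
  rw [Fin.snoc_update, ← hγ, (P x).map_update_smul, Function.update_eq_self, smul_smul, smul_eq_mul]
open ContinuousLinearMap in
lemma smooth_eval {m k : ℕ} (P : (Fin m → ℝ) → (((Fin m → ℝ) →L[ℝ] ℝ) [⋀^Fin k]→ₗ[ℝ] ℝ))
    (hPs : SmoothNV P) (α : Fin k → (Fin m → ℝ) → (Fin m → ℝ) →L[ℝ] ℝ)
    (hα : ∀ i, ContDiff ℝ (⊤ : ℕ∞) (α i)) :
    ContDiff ℝ (⊤ : ℕ∞) (fun y => P y (fun i => α i y)) := by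
  have h : (fun y => P y (fun i => α i y)) = fun y =>
      ∑ r : Fin k → Fin m, (∏ i, (α i y) (Pi.single (r i) 1)) *
        P y (fun i => (ContinuousLinearMap.proj (r i) : (Fin m → ℝ) →L[ℝ] ℝ)) := by
    funext y
    have h1 : (fun i => α i y) = fun i => ∑ j, (α i y) (Pi.single j 1) •
        (ContinuousLinearMap.proj j : (Fin m → ℝ) →L[ℝ] ℝ) := funext fun i => clm_eq_sum _
    have h2 := MultilinearMap.map_sum (P y).toMultilinearMap
      (g := fun i j => (α i y) (Pi.single j 1) •
        (ContinuousLinearMap.proj j : (Fin m → ℝ) →L[ℝ] ℝ))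
    simp only [AlternatingMap.coe_multilinearMap] at h2
    rw [h1, h2]
    refine Finset.sum_congr rfl fun r _ => ?_
    have h3 := MultilinearMap.map_smul_univ (P y).toMultilinearMap
      (fun i => (α i y) (Pi.single (r i) 1))
      (fun i => (ContinuousLinearMap.proj (r i) : (Fin m → ℝ) →L[ℝ] ℝ))
    simp only [AlternatingMap.coe_multilinearMap] at h3
    rw [h3, smul_eq_mul]
  rw [h]
  refine ContDiff.sum fun r _ => ContDiff.mul ?_ (hPs _)
  exact contDiff_prod fun i _ => (hα i).clm_apply contDiff_const

set_option maxHeartbeats 1000000 in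
/-- On a Nambu-Poisson manifold `(M,P)`, for any smooth function `f` and
1-forms `α₁,…,α_{n+1}`, the form-bracket satisfies
`{fα₁, α₂,…,α_{n+1}} = f{α₁,…,α_{n+1}} + P(df, α₂,…,α_{n+1}) α₁`. -/
theorem formBracket_function_linearity
    (m n : ℕ) (hn : 2 ≤ n)
    (P : (Fin m → ℝ) → (((Fin m → ℝ) →L[ℝ] ℝ) [⋀^Fin (n + 1)]→ₗ[ℝ] ℝ))
    (hPs : SmoothNV P) (hP : IsNambu P)
    (f : (Fin m → ℝ) → ℝ) (hf : ContDiff ℝ (⊤ : ℕ∞) f)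
    (α : Fin (n + 1) → (Fin m → ℝ) → (Fin m → ℝ) →L[ℝ] ℝ)
    (hα : ∀ i, ContDiff ℝ (⊤ : ℕ∞) (α i)) (x : Fin m → ℝ) :
    formBracket P (Function.update α 0 (fun y => f y • α 0 y)) x =
      f x • formBracket P α x +
        (P x (Fin.cons (fderiv ℝ f x) (fun i : Fin n => α i.succ x))) • α 0 x := by
  classical
  have hnz : NeZero n := ⟨by omega⟩
  set w : (Fin m → ℝ) → (Fin m → ℝ) →L[ℝ] ℝ := fun y => f y • α 0 y with hw
  have hgs : ContDiff ℝ (⊤ : ℕ∞) (fun y => P y (fun i => α i y)) := smooth_eval P hPs α hα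
  have hfd : DifferentiableAt ℝ f x := hf.differentiable (by simp) x
  have hgd : DifferentiableAt ℝ (fun y => P y (fun i => α i y)) x :=
    hgs.differentiable (by simp) x
  have hα0d : DifferentiableAt ℝ (α 0) x := (hα 0).differentiable (by simp) x
  -- the scalar function rewrites as a product
  have hfun : (fun y => P y (fun i => Function.update α 0 w i y)) =
      fun y => f y * P y (fun i => α i y) := by
    funext y
    have ht : (fun i => Function.update α 0 w i y) =
        Function.update (fun i => α i y) 0 (f y • α 0 y) := by
      funext i
      rcases eq_or_ne i 0 with h | h
      · subst h; simp [hw]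
      · simp [Function.update_of_ne h]
    rw [ht]
    have h2 : f y • α 0 y = f y • (fun i => α i y) 0 := rfl
    rw [h2, (P y).map_update_smul, Function.update_eq_self, smul_eq_mul]
  have hfd1 : fderiv ℝ (fun y => P y (fun i => Function.update α 0 w i y)) x
      = f x • fderiv ℝ (fun y => P y (fun i => α i y)) x
        + (P x (fun i => α i x)) • fderiv ℝ f x := by
    rw [hfun]; exact fderiv_mul hfd hgd
  have hfdv : fderiv ℝ w x = f x • fderiv ℝ (α 0) x + (fderiv ℝ f x).smulRight (α 0 x) :=
    fderiv_smul hfd hα0d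
  -- k = 0 sharp tuple is unchanged
  have ht0 : (fun i => Function.update α 0 w ((0 : Fin (n + 1)).succAbove i) x) =
      fun i => α ((0 : Fin (n + 1)).succAbove i) x := by
    funext i
    rw [Fin.zero_succAbove, Function.update_of_ne (Fin.succ_ne_zero i)]
  have htuple : (fun i => α ((0 : Fin (n + 1)).succAbove i) x) = fun i => α i.succ x := by
    funext i; rw [Fin.zero_succAbove]
  -- scalar identities
  have hsq : ((-1 : ℝ)) ^ n * ((-1 : ℝ)) ^ n = 1 := by
    rw [← pow_add]
    exact Even.neg_one_pow ⟨n, (two_mul n).symm ▸ rfl⟩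
  have hdf : fderiv ℝ f x (sharp P (fun i => α ((0 : Fin (n + 1)).succAbove i) x) x) =
      (-1 : ℝ) ^ n * P x (Fin.cons (fderiv ℝ f x) (fun i : Fin n => α i.succ x)) := by
    rw [htuple, sharp_pairing, P_snoc_rotate]
  have hα0s : α 0 x (sharp P (fun i => α ((0 : Fin (n + 1)).succAbove i) x) x) =
      (-1 : ℝ) ^ n * P x (fun i => α i x) := by
    rw [htuple, sharp_pairing, P_snoc_rotate]
    congr 1
    exact congrArg (P x) (Fin.cons_self_tail (fun i => α i x))
  -- k ≠ 0 terms pick up a factor of f x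
  have htk : ∀ j : Fin n, (fun i => Function.update α 0 w ((j.succ).succAbove i) x) =
      Function.update (fun i => α ((j.succ).succAbove i) x) 0 (f x • α 0 x) := by
    intro j; funext i
    rcases eq_or_ne i 0 with h | h
    · subst h
      rw [Fin.succ_succAbove_zero, Function.update_self, Function.update_self]
    · rw [Function.update_of_ne (Fin.succAbove_ne_zero (Fin.succ_ne_zero j) h),
        Function.update_of_ne h]
  have hsk : ∀ j : Fin n, sharp P (fun i => Function.update α 0 w ((j.succ).succAbove i) x) x
      = f x • sharp P (fun i => α ((j.succ).succAbove i) x) x := by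
    intro j
    rw [htk j]
    have hγ0 : α 0 x = (fun i : Fin n => α ((j.succ).succAbove i) x) 0 := by
      show α 0 x = α ((j.succ).succAbove 0) x
      rw [Fin.succ_succAbove_zero]
    rw [hγ0]
    exact sharp_update_smul P _ x (f x)
  have key : ∀ j : Fin n,
      ((-1 : ℝ)) ^ (n + ((j.succ : Fin (n + 1)) : ℕ)) •
        ((fderiv ℝ (Function.update α 0 w j.succ) x)
            (sharp P (fun i => Function.update α 0 w ((j.succ).succAbove i) x) x) -
          (fderiv ℝ (Function.update α 0 w j.succ) x).flip
            (sharp P (fun i => Function.update α 0 w ((j.succ).succAbove i) x) x))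
      = f x • (((-1 : ℝ)) ^ (n + ((j.succ : Fin (n + 1)) : ℕ)) •
        ((fderiv ℝ (α j.succ) x) (sharp P (fun i => α ((j.succ).succAbove i) x) x) -
          (fderiv ℝ (α j.succ) x).flip (sharp P (fun i => α ((j.succ).succAbove i) x) x))) := by
    intro j
    rw [Function.update_of_ne (Fin.succ_ne_zero j), hsk j, map_smul, map_smul]
    module
  -- the k = 0 term
  have hT0 : ((-1 : ℝ)) ^ n •
      ((fderiv ℝ w x) (sharp P (fun i => α ((0 : Fin (n + 1)).succAbove i) x) x) -
        (fderiv ℝ w x).flip (sharp P (fun i => α ((0 : Fin (n + 1)).succAbove i) x) x))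
      = f x • (((-1 : ℝ)) ^ n •
          ((fderiv ℝ (α 0) x) (sharp P (fun i => α ((0 : Fin (n + 1)).succAbove i) x) x) -
            (fderiv ℝ (α 0) x).flip (sharp P (fun i => α ((0 : Fin (n + 1)).succAbove i) x) x)))
        + (P x (Fin.cons (fderiv ℝ f x) (fun i : Fin n => α i.succ x))) • α 0 x
        - (P x (fun i => α i x)) • fderiv ℝ f x := by
    rw [hfdv]
    ext u
    simp only [ContinuousLinearMap.add_apply, ContinuousLinearMap.smul_apply,
      ContinuousLinearMap.sub_apply, ContinuousLinearMap.flip_apply,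
      ContinuousLinearMap.smulRight_apply, ContinuousLinearMap.coe_smul', Pi.smul_apply,
      smul_eq_mul]
    rw [hdf, hα0s]
    linear_combination ((P x (Fin.cons (fderiv ℝ f x) (fun i : Fin n => α i.succ x))) * (α 0 x u)
      - (P x (fun i => α i x)) * (fderiv ℝ f x u)) * hsq
  simp only [formBracket]
  rw [Fin.sum_univ_succ, Fin.sum_univ_succ, hfd1]
  simp only [Fin.val_zero, add_zero, Function.update_self]
  rw [ht0, Finset.sum_congr rfl (fun j _ => key j), hT0, ← Finset.smul_sum]
  module
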